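/- In any finite MDP the Blackwell discount factor exists: there exists γ̄ ∈ [0,1) such that for every γ ∈ (γ̄, 1) and every policy π, π is γ-discounted optimal if and only if π is Blackwell-optimal. -/

import Mathlib

open Matrix

/-- The transition matrix induced by a policy `π`. -/
def policyMatrix {S A : Type*} [Fintype S] (P : S → A → S → ℝ) (π : S → A) :
    Matrix S S ℝ :=
  Matrix.of fun s s' => P s (π s) s'

/-- The reward vector induced by a policy `π`. -/
def policyReward {S A : Type*} (r : S → A → ℝ) (π : S → A) : S → ℝ :=
  fun s => r s (π s)

/-- The discounted value function of a policy `π`: `v^π_γ = (I - γ P_π)⁻¹ r_π`. -/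
noncomputable def valueFn {S A : Type*} [Fintype S] [DecidableEq S]
    (r : S → A → ℝ) (P : S → A → S → ℝ) (π : S → A) (γ : ℝ) : S → ℝ :=
  ((1 : Matrix S S ℝ) - γ • policyMatrix P π)⁻¹ *ᵥ policyReward r π

/-- `π` is `γ`-discounted optimal. -/
def DiscountedOptimal {S A : Type*} [Fintype S] [DecidableEq S]
    (r : S → A → ℝ) (P : S → A → S → ℝ) (γ : ℝ) (π : S → A) : Prop :=
  ∀ (π' : S → A) (s : S), valueFn r P π' γ s ≤ valueFn r P π γ s

/-- `π` is Blackwell-optimal: it is `γ'`-discounted optimal for all `γ'` in some `[γ₀, 1)`. -/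
def BlackwellOptimal {S A : Type*} [Fintype S] [DecidableEq S]
    (r : S → A → ℝ) (P : S → A → S → ℝ) (π : S → A) : Prop :=
  ∃ γ₀ : ℝ, 0 ≤ γ₀ ∧ γ₀ < 1 ∧
    ∀ γ' : ℝ, γ₀ ≤ γ' → γ' < 1 → DiscountedOptimal r P γ' π

/-!
For policies `π, π'` and a state `s`, Cramer's rule writes `v^π_{γ,s} - v^{π'}_{γ,s}` as a
rational function of `γ` whose denominator `det (1 - γ P_π) * det (1 - γ P_{π'})` does not vanish
for `|γ| < 1`, so on `[0, 1)` its sign is that of a polynomial. There are finitely many such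
polynomials, hence an interval `(γ̄, 1)` on which none of the nonzero ones has a root, and by the
intermediate value theorem none changes sign there. So the set of `γ`-discounted optimal policies
is the same for every `γ ∈ (γ̄, 1)`, which makes it the set of Blackwell-optimal policies.
-/

open Matrix Polynomial Filter Topology Set

namespace Matrix

variable {n R : Type*} [DecidableEq n] [CommRing R]

theorem map_eval_one_sub_X_smul (M : Matrix n n R) (γ : R) :
    (1 - (X : R[X]) • M.map C).map (eval γ) = 1 - γ • M := by
  ext i j
  by_cases h : i = j <;> simp [h, mul_comm γ]

variable [Fintype n]

/-- `1 - γ • M` is strictly diagonally dominant. -/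
theorem det_one_sub_smul_ne_zero_of_mem_rowStochastic {M : Matrix n n ℝ}
    (hM : M ∈ rowStochastic ℝ n) {γ : ℝ} (hγ : |γ| < 1) : (1 - γ • M).det ≠ 0 := by
  refine det_ne_zero_of_sum_row_lt_diag fun k => ?_
  have hoff : ∑ j ∈ Finset.univ.erase k, ‖(1 - γ • M) k j‖ = |γ| * (1 - M k k) := by
    rw [← sum_row_of_mem_rowStochastic hM k, ← Finset.sum_erase_eq_sub (Finset.mem_univ k),
      Finset.mul_sum]
    refine Finset.sum_congr rfl fun j hj => ?_
    simp [one_apply_ne' (Finset.ne_of_mem_erase hj),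
      abs_of_nonneg (nonneg_of_mem_rowStochastic hM)]
  have hdiag : 1 - |γ| * M k k ≤ ‖(1 - γ • M) k k‖ := by
    have := abs_sub_abs_le_abs_sub 1 (γ * M k k)
    simpa [abs_mul, abs_of_nonneg (nonneg_of_mem_rowStochastic hM)] using this
  rw [hoff]
  nlinarith [abs_nonneg γ]

theorem eval_charpolyRev_eq_det (M : Matrix n n R) (γ : R) :
    M.charpolyRev.eval γ = (1 - γ • M).det := by
  rw [charpolyRev, ← coe_evalRingHom, RingHom.map_det, RingHom.mapMatrix_apply, coe_evalRingHom,
    map_eval_one_sub_X_smul]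

/-- The numerator of `(1 - X • M)⁻¹ *ᵥ b` given by Cramer's rule; its denominator is
`M.charpolyRev`. -/
noncomputable def resolventNumerator (M : Matrix n n R) (b : n → R) : n → R[X] :=
  adjugate (1 - (X : R[X]) • M.map C) *ᵥ fun i => C (b i)

theorem eval_resolventNumerator (M : Matrix n n R) (b : n → R) (γ : R) (i : n) :
    (resolventNumerator M b i).eval γ = (adjugate (1 - γ • M) *ᵥ b) i := by
  rw [← map_eval_one_sub_X_smul, ← coe_evalRingHom, ← RingHom.mapMatrix_apply,
    ← RingHom.map_adjugate]
  simp [resolventNumerator, mulVec, dotProduct]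

theorem eval_charpolyRev_mul_inv_mulVec {K : Type*} [Field K] (M : Matrix n n K) (b : n → K)
    {γ : K} (h : (1 - γ • M).det ≠ 0) (i : n) :
    M.charpolyRev.eval γ * ((1 - γ • M)⁻¹ *ᵥ b) i = (resolventNumerator M b i).eval γ := by
  rw [eval_charpolyRev_eq_det, eval_resolventNumerator, ← cramer_eq_adjugate_mulVec,
    ← det_smul_inv_mulVec_eq_cramer _ _ h.isUnit, Pi.smul_apply, smul_eq_mul]

end Matrix

theorem IsPreconnected.nonneg_iff_of_forall_ne_zero {X : Type*} [TopologicalSpace X] {s : Set X}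
    (hs : IsPreconnected s) {f : X → ℝ} (hf : ContinuousOn f s) (hne : ∀ x ∈ s, f x ≠ 0)
    {x y : X} (hx : x ∈ s) (hy : y ∈ s) : 0 ≤ f x ↔ 0 ≤ f y := by
  have key : ∀ a ∈ s, ∀ b ∈ s, 0 ≤ f a → 0 ≤ f b := by
    intro a ha b hb hfa
    by_contra! hfb
    obtain ⟨c, hc, hfc⟩ := hs.intermediate_value hb ha hf ⟨hfb.le, hfa⟩
    exact hne c hc hfc
  exact ⟨key x hx y hy, key y hy x hx⟩

namespace Polynomial

theorem eval_nonneg_iff_of_isRoot_imp_eq_zero {p : ℝ[X]} {s : Set ℝ} (hs : IsPreconnected s)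
    (hroot : ∀ x ∈ s, p.IsRoot x → p = 0) {x y : ℝ} (hx : x ∈ s) (hy : y ∈ s) :
    0 ≤ p.eval x ↔ 0 ≤ p.eval y := by
  rcases eq_or_ne p 0 with rfl | hp
  · simp
  exact hs.nonneg_iff_of_forall_ne_zero p.continuousOn (fun z hz h => hp (hroot z hz h)) hx hy

theorem eventually_nhdsNE_isRoot_imp_eq_zero (p : ℝ[X]) (a : ℝ) :
    ∀ᶠ x in 𝓝[≠] a, p.IsRoot x → p = 0 := by
  rcases eq_or_ne p 0 with rfl | hp
  · exact Eventually.of_forall fun _ _ => rfl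
  filter_upwards [nhdsNE_le_cofinite a (finite_setOfPred_isRoot hp).compl_mem_cofinite]
    with x hx h using absurd h hx

end Polynomial

section MDP

variable {S A : Type*} [Fintype S] [DecidableEq S] (r : S → A → ℝ) (P : S → A → S → ℝ)

theorem policyMatrix_mem_rowStochastic (hP0 : ∀ s a s', 0 ≤ P s a s')
    (hP1 : ∀ s a, ∑ s', P s a s' = 1) (π : S → A) : policyMatrix P π ∈ rowStochastic ℝ S :=
  mem_rowStochastic_iff_sum.2 ⟨fun s s' => hP0 s (π s) s', fun s => hP1 s (π s)⟩

/-- The value gap `v^π_{γ,s} - v^{π'}_{γ,s}` cleared of its Cramer denominator `d(γ) d'(γ)`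
and multiplied by it once more, so that the factor left over is a square. -/
noncomputable def valueGapPoly (π π' : S → A) (s : S) : ℝ[X] :=
  let d := (policyMatrix P π).charpolyRev
  let d' := (policyMatrix P π').charpolyRev
  (resolventNumerator (policyMatrix P π) (policyReward r π) s * d' -
    resolventNumerator (policyMatrix P π') (policyReward r π') s * d) * (d * d')

variable {r P}

theorem eval_valueGapPoly (hP0 : ∀ s a s', 0 ≤ P s a s') (hP1 : ∀ s a, ∑ s', P s a s' = 1)
    (π π' : S → A) (s : S) {γ : ℝ} (hγ : |γ| < 1) :
    (valueGapPoly r P π π' s).eval γ = (valueFn r P π γ s - valueFn r P π' γ s) *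
      ((policyMatrix P π).charpolyRev.eval γ * (policyMatrix P π').charpolyRev.eval γ) ^ 2 := by
  have hdet (π : S → A) : (1 - γ • policyMatrix P π).det ≠ 0 :=
    det_one_sub_smul_ne_zero_of_mem_rowStochastic (policyMatrix_mem_rowStochastic P hP0 hP1 π) hγ
  simp only [valueGapPoly, valueFn, eval_mul, eval_sub,
    ← eval_charpolyRev_mul_inv_mulVec _ _ (hdet _)]
  ring

theorem valueFn_le_iff_eval_valueGapPoly_nonneg (hP0 : ∀ s a s', 0 ≤ P s a s')
    (hP1 : ∀ s a, ∑ s', P s a s' = 1) (π π' : S → A) (s : S) {γ : ℝ} (hγ : |γ| < 1) :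
    valueFn r P π' γ s ≤ valueFn r P π γ s ↔ 0 ≤ (valueGapPoly r P π π' s).eval γ := by
  have hd (π : S → A) : (policyMatrix P π).charpolyRev.eval γ ≠ 0 := by
    rw [eval_charpolyRev_eq_det]
    exact det_one_sub_smul_ne_zero_of_mem_rowStochastic
      (policyMatrix_mem_rowStochastic P hP0 hP1 π) hγ
  rw [eval_valueGapPoly hP0 hP1 π π' s hγ,
    mul_nonneg_iff_of_pos_right (pow_two_pos_of_ne_zero (mul_ne_zero (hd π) (hd π'))),
    sub_nonneg]

theorem exists_discountedOptimal_iff_of_mem_Ioo [Fintype A] (hP0 : ∀ s a s', 0 ≤ P s a s')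
    (hP1 : ∀ s a, ∑ s', P s a s' = 1) :
    ∃ γbar : ℝ, 0 ≤ γbar ∧ γbar < 1 ∧ ∀ γ₁ ∈ Ioo γbar 1, ∀ γ₂ ∈ Ioo γbar 1, ∀ π : S → A,
      DiscountedOptimal r P γ₁ π ↔ DiscountedOptimal r P γ₂ π := by
  -- Finitely many nonzero polynomials have no root on some interval `(l, 1)`.
  obtain ⟨l, hl, hroots⟩ := mem_nhdsLT_iff_exists_Ioo_subset.1 <| nhdsLT_le_nhdsNE 1 <|
    eventually_all.2 fun i : (S → A) × (S → A) × S =>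
      (valueGapPoly r P i.1 i.2.1 i.2.2).eventually_nhdsNE_isRoot_imp_eq_zero 1
  have habs : ∀ γ ∈ Ioo (max l 0) 1, |γ| < 1 := fun γ hγ =>
    abs_lt.2 ⟨by linarith [le_max_right l 0, hγ.1], hγ.2⟩
  refine ⟨max l 0, le_max_right l 0, max_lt hl one_pos, fun γ₁ h₁ γ₂ h₂ π =>
    forall_congr' fun π' => forall_congr' fun s => ?_⟩
  rw [valueFn_le_iff_eval_valueGapPoly_nonneg hP0 hP1 π π' s (habs γ₁ h₁),
    valueFn_le_iff_eval_valueGapPoly_nonneg hP0 hP1 π π' s (habs γ₂ h₂)]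
  exact eval_nonneg_iff_of_isRoot_imp_eq_zero isPreconnected_Ioo
    (fun x hx => hroots (Ioo_subset_Ioo_left (le_max_left l 0) hx) (π, π', s)) h₁ h₂

end MDP

theorem exists_blackwell_discount_factor_general {S A : Type*} [Fintype S] [DecidableEq S]
    [Fintype A]
    (r : S → A → ℝ) (P : S → A → S → ℝ)
    (hP0 : ∀ s a s', 0 ≤ P s a s') (hP1 : ∀ s a, ∑ s', P s a s' = 1) :
    ∃ γbar : ℝ, 0 ≤ γbar ∧ γbar < 1 ∧
      ∀ γ : ℝ, γbar < γ → γ < 1 →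
        ∀ π : S → A, DiscountedOptimal r P γ π ↔ BlackwellOptimal r P π := by
  obtain ⟨γbar, hγbar0, hγbar1, hconst⟩ := exists_discountedOptimal_iff_of_mem_Ioo hP0 hP1
  refine ⟨γbar, hγbar0, hγbar1, fun γ hγbar hγ π => ⟨fun hopt => ?_, ?_⟩⟩
  · exact ⟨γ, by linarith, hγ, fun γ' hγγ' hγ' =>
      (hconst γ ⟨hγbar, hγ⟩ γ' ⟨by linarith, hγ'⟩ π).1 hopt⟩
  · rintro ⟨γ₀, -, hγ₀, hopt⟩
    have hmax : max γ₀ γ ∈ Ioo γbar 1 := ⟨lt_max_of_lt_right hγbar, max_lt hγ₀ hγ⟩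
    exact (hconst γ ⟨hγbar, hγ⟩ _ hmax π).2 (hopt _ (le_max_left γ₀ γ) hmax.2)

/-- In any finite MDP the Blackwell discount factor exists: there is `γ̄ ∈ [0,1)` such that
for every `γ ∈ (γ̄, 1)`, a policy is `γ`-discounted optimal iff it is Blackwell-optimal. -/
theorem exists_blackwell_discount_factor {S A : Type*} [Fintype S] [DecidableEq S]
    [Nonempty S] [Fintype A] [Nonempty A]
    (r : S → A → ℝ) (P : S → A → S → ℝ)
    (hP0 : ∀ s a s', 0 ≤ P s a s') (hP1 : ∀ s a, ∑ s', P s a s' = 1) :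
    ∃ γbar : ℝ, 0 ≤ γbar ∧ γbar < 1 ∧
      ∀ γ : ℝ, γbar < γ → γ < 1 →
        ∀ π : S → A, DiscountedOptimal r P γ π ↔ BlackwellOptimal r P π :=
  exists_blackwell_discount_factor_general r P hP0 hP1
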